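/- In the q-deformed Bannai–Ito algebra, the element C = (q^{−1/2} − q^{3/2}) I₁I₂I₃ + q I₁² + q^{−1} I₂² + q I₃² − (1−q) ι₁ I₁ − (1−q^{−1}) ι₂ I₂ − (1−q) ι₃ I₃ commutes with I₁, I₂ and I₃. -/

import Mathlib

/-! Each defining relation lets one reorder a product `Iⱼ * Iᵢ` with `i < j` into
`I₁`–`I₂`–`I₃` order, at the cost of lower-degree terms. Rewriting both `C * Iᵢ` and
`Iᵢ * C` into this ordered normal form, the two sides agree coefficient by coefficient. -/

section QAnticomm

variable {K A : Type*} [Field K] [Ring A] [Algebra K A]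

/-- `{X, Y}_q` with `s = q^{1/2}`. -/
def qAnticomm (s : K) (X Y : A) : A := s • (X * Y) + s⁻¹ • (Y * X)

theorem qAnticomm_inv (s : K) (X Y : A) : qAnticomm s⁻¹ Y X = qAnticomm s X Y := by
  rw [qAnticomm, qAnticomm, inv_inv, add_comm]

theorem mul_eq_of_qAnticomm {s : K} (hs : s ≠ 0) {X Y Z : A} {c : K}
    (h : qAnticomm s X Y = Z + c • 1) :
    Y * X = s • Z + (s * c) • 1 - s ^ 2 • (X * Y) := by
  have h' : s⁻¹ • (Y * X) = Z + c • 1 - s • (X * Y) := eq_sub_of_add_eq' h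
  calc Y * X = s • (s⁻¹ • (Y * X)) := by rw [smul_smul, mul_inv_cancel₀ hs, one_smul]
    _ = _ := by rw [h']; module

theorem mul_mul_eq_of_qAnticomm {s : K} (hs : s ≠ 0) {X Y Z : A} {c : K}
    (h : qAnticomm s X Y = Z + c • 1) (x : A) :
    Y * (X * x) = s • (Z * x) + (s * c) • x - s ^ 2 • (X * (Y * x)) := by
  rw [← mul_assoc, mul_eq_of_qAnticomm hs h, sub_mul, add_mul, smul_mul_assoc, smul_mul_assoc,
    smul_mul_assoc, one_mul, mul_assoc]

/-- The Casimir element of the q-deformed Bannai–Ito algebra, with `s = q^{1/2}`. -/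
def casimir (s ι₁ ι₂ ι₃ : K) (I₁ I₂ I₃ : A) : A :=
  (s⁻¹ - s ^ 3) • (I₁ * I₂ * I₃) + s ^ 2 • I₁ ^ 2 + (s ^ 2)⁻¹ • I₂ ^ 2 + s ^ 2 • I₃ ^ 2
    - ((1 - s ^ 2) * ι₁) • I₁ - ((1 - (s ^ 2)⁻¹) * ι₂) • I₂ - ((1 - s ^ 2) * ι₃) • I₃

theorem casimir_commute {s : K} (hs : s ≠ 0) {I₁ I₂ I₃ : A} {ι₁ ι₂ ι₃ : K}
    (h12 : qAnticomm s I₁ I₂ = I₃ + ι₃ • 1) (h23 : qAnticomm s I₂ I₃ = I₁ + ι₁ • 1)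
    (h31 : qAnticomm s I₃ I₁ = I₂ + ι₂ • 1) :
    Commute (casimir s ι₁ ι₂ ι₃ I₁ I₂ I₃) I₁ ∧ Commute (casimir s ι₁ ι₂ ι₃ I₁ I₂ I₃) I₂ ∧
      Commute (casimir s ι₁ ι₂ ι₃ I₁ I₂ I₃) I₃ := by
  rw [← qAnticomm_inv] at h31
  have e21 := mul_eq_of_qAnticomm hs h12
  have e32 := mul_eq_of_qAnticomm hs h23
  have e31 := mul_eq_of_qAnticomm (inv_ne_zero hs) h31
  have e21' := mul_mul_eq_of_qAnticomm hs h12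
  have e32' := mul_mul_eq_of_qAnticomm hs h23
  have e31' := mul_mul_eq_of_qAnticomm (inv_ne_zero hs) h31
  refine ⟨?_, ?_, ?_⟩ <;>
  · simp only [Commute, SemiconjBy, casimir, pow_two, mul_assoc, sub_mul, add_mul, mul_sub,
      mul_add, smul_mul_assoc, mul_smul_comm, smul_add, smul_sub, smul_smul, mul_one, one_mul,
      e21, e21', e32, e32', e31, e31']
    match_scalars <;> field_simp <;> ring

end QAnticomm

theorem stmt_8_general (q : ℝ) (hq : 0 < q) {A : Type*} [Ring A] [Algebra ℂ A]
    (I₁ I₂ I₃ : A) (ι₁ ι₂ ι₃ : ℂ)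
    (h12 : ((Real.sqrt q : ℝ) : ℂ) • (I₁ * I₂) + (((Real.sqrt q : ℝ) : ℂ))⁻¹ • (I₂ * I₁)
      = I₃ + ι₃ • (1 : A))
    (h23 : ((Real.sqrt q : ℝ) : ℂ) • (I₂ * I₃) + (((Real.sqrt q : ℝ) : ℂ))⁻¹ • (I₃ * I₂)
      = I₁ + ι₁ • (1 : A))
    (h31 : ((Real.sqrt q : ℝ) : ℂ) • (I₃ * I₁) + (((Real.sqrt q : ℝ) : ℂ))⁻¹ • (I₁ * I₃)
      = I₂ + ι₂ • (1 : A))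
    (C : A)
    (hC : C = (((Real.sqrt q)⁻¹ - q * Real.sqrt q : ℝ) : ℂ) • (I₁ * I₂ * I₃)
      + ((q : ℝ) : ℂ) • I₁ ^ 2 + ((q⁻¹ : ℝ) : ℂ) • I₂ ^ 2 + ((q : ℝ) : ℂ) • I₃ ^ 2
      - (((1 - q : ℝ) : ℂ) * ι₁) • I₁ - (((1 - q⁻¹ : ℝ) : ℂ) * ι₂) • I₂
      - (((1 - q : ℝ) : ℂ) * ι₃) • I₃) :
    C * I₁ = I₁ * C ∧ C * I₂ = I₂ * C ∧ C * I₃ = I₃ * C := by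
  set s : ℂ := ((Real.sqrt q : ℝ) : ℂ)
  have hs : s ≠ 0 := Complex.ofReal_ne_zero.mpr (Real.sqrt_pos.mpr hq).ne'
  have hsq : ((q : ℝ) : ℂ) = s ^ 2 := by
    rw [← Complex.ofReal_pow, Real.sq_sqrt hq.le]
  have hq3 : ((q * Real.sqrt q : ℝ) : ℂ) = s ^ 3 := by
    rw [Complex.ofReal_mul, hsq]; ring
  have hC' : C = casimir s ι₁ ι₂ ι₃ I₁ I₂ I₃ := by
    simp only [hC, casimir, Complex.ofReal_sub, Complex.ofReal_inv, Complex.ofReal_one, hq3, hsq]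
    rfl
  obtain ⟨h₁, h₂, h₃⟩ := casimir_commute hs h12 h23 h31
  rw [hC']
  exact ⟨h₁.eq, h₂.eq, h₃.eq⟩

theorem stmt_8 (q : ℝ) (hq : 0 < q) (hq1 : q ≠ 1) {A : Type*} [Ring A] [Algebra ℂ A]
    (I₁ I₂ I₃ : A) (ι₁ ι₂ ι₃ : ℂ)
    (h12 : ((Real.sqrt q : ℝ) : ℂ) • (I₁ * I₂) + (((Real.sqrt q : ℝ) : ℂ))⁻¹ • (I₂ * I₁)
      = I₃ + ι₃ • (1 : A))
    (h23 : ((Real.sqrt q : ℝ) : ℂ) • (I₂ * I₃) + (((Real.sqrt q : ℝ) : ℂ))⁻¹ • (I₃ * I₂)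
      = I₁ + ι₁ • (1 : A))
    (h31 : ((Real.sqrt q : ℝ) : ℂ) • (I₃ * I₁) + (((Real.sqrt q : ℝ) : ℂ))⁻¹ • (I₁ * I₃)
      = I₂ + ι₂ • (1 : A))
    (C : A)
    (hC : C = (((Real.sqrt q)⁻¹ - q * Real.sqrt q : ℝ) : ℂ) • (I₁ * I₂ * I₃)
      + ((q : ℝ) : ℂ) • I₁ ^ 2 + ((q⁻¹ : ℝ) : ℂ) • I₂ ^ 2 + ((q : ℝ) : ℂ) • I₃ ^ 2
      - (((1 - q : ℝ) : ℂ) * ι₁) • I₁ - (((1 - q⁻¹ : ℝ) : ℂ) * ι₂) • I₂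
      - (((1 - q : ℝ) : ℂ) * ι₃) • I₃) :
    C * I₁ = I₁ * C ∧ C * I₂ = I₂ * C ∧ C * I₃ = I₃ * C :=
  stmt_8_general q hq I₁ I₂ I₃ ι₁ ι₂ ι₃ h12 h23 h31 C hC
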